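/- arXiv:1604.04609 — 2 statements merged into one kernel-verified Lean document; each statement's English description precedes it below -/
import Mathlib

section
/- Let X be a Tychonoff space possessing a π-network consisting of nontrivial connected sets. Then the following are equivalent: (1) C_ph(X) is separable; (2) X has a countable T₀-separating family of zero-sets; (3) X is separable submetrizable. -/
open TopologicalSpace Set Topology

/-- The point-open topology `p` on `C(X, ℝ)`. -/
def pointOpenTopology (X : Type*) [TopologicalSpace X] : TopologicalSpace C(X, ℝ) :=
  generateFrom {S | ∃ (x : X) (U : Set ℝ), IsOpen U ∧ S = {f : C(X, ℝ) | f x ∈ U}}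

/-- The open-point topology `h` on `C(X, ℝ)`. -/
def openPointTopology (X : Type*) [TopologicalSpace X] : TopologicalSpace C(X, ℝ) :=
  generateFrom {S | ∃ (V : Set X) (r : ℝ), IsOpen V ∧ S = {f : C(X, ℝ) | ∃ x ∈ V, f x = r}}

/-- The bi-point-open topology `ph` on `C(X, ℝ)`: generated by both kinds of subbasic sets. -/
def biPointOpenTopology (X : Type*) [TopologicalSpace X] : TopologicalSpace C(X, ℝ) :=
  generateFrom
    ({S | ∃ (x : X) (U : Set ℝ), IsOpen U ∧ S = {f : C(X, ℝ) | f x ∈ U}} ∪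
     {S | ∃ (V : Set X) (r : ℝ), IsOpen V ∧ S = {f : C(X, ℝ) | ∃ x ∈ V, f x = r}})

/-- The dispersion character: minimum cardinality of a nonempty open subset. -/
noncomputable def dispersionCharacter (X : Type*) [TopologicalSpace X] : Cardinal :=
  sInf {c | ∃ U : Set X, IsOpen U ∧ U.Nonempty ∧ c = Cardinal.mk U}

/-- A π-network: a family of nonempty subsets such that every nonempty open set contains one. -/
def IsPiNetwork {X : Type*} [TopologicalSpace X] (γ : Set (Set X)) : Prop :=
  (∀ A ∈ γ, A.Nonempty) ∧ ∀ U : Set X, IsOpen U → U.Nonempty → ∃ A ∈ γ, A ⊆ U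

/-- A π-base: a family of nonempty open subsets such that every nonempty open set contains one. -/
def IsPiBase {X : Type*} [TopologicalSpace X] (γ : Set (Set X)) : Prop :=
  (∀ A ∈ γ, IsOpen A ∧ A.Nonempty) ∧ ∀ U : Set X, IsOpen U → U.Nonempty → ∃ A ∈ γ, A ⊆ U

/-- A network. -/
def IsNetwork {X : Type*} [TopologicalSpace X] (𝒩 : Set (Set X)) : Prop :=
  ∀ (x : X) (U : Set X), IsOpen U → x ∈ U → ∃ N ∈ 𝒩, x ∈ N ∧ N ⊆ U

/-- An 𝓘-set. -/
def IsISet {X : Type*} [TopologicalSpace X] (A : Set X) : Prop :=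
  ∃ (f : X → ℝ) (a b : ℝ), Continuous f ∧ a < b ∧ Icc a b ⊆ f '' A

/-- A T₀-separating family. -/
def T0Separating {X : Type*} (γ : Set (Set X)) : Prop :=
  ∀ x y : X, x ≠ y → ∃ V ∈ γ, (x ∈ V ∧ y ∉ V) ∨ (y ∈ V ∧ x ∉ V)

/-- A zero-set. -/
def IsZeroSet {X : Type*} [TopologicalSpace X] (Z : Set X) : Prop :=
  ∃ f : X → ℝ, Continuous f ∧ Z = f ⁻¹' {0}

/-- Separable submetrizable: admits a coarser separable metrizable topology. -/
def SeparableSubmetrizable (X : Type*) [t : TopologicalSpace X] : Prop :=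
  ∃ t' : TopologicalSpace X, (∀ U : Set X, IsOpen[t'] U → IsOpen[t] U) ∧
    @SeparableSpace X t' ∧ @MetrizableSpace X t'

/-- Hypothesis (M). -/
def HypothesisM : Prop :=
  ∀ A : Set ℝ, Cardinal.mk A = Cardinal.continuum →
    ∃ f : A → ℝ, Continuous f ∧ Set.range f = Icc (0 : ℝ) 1

/-! For (1) ⇒ (2), a countable ph-dense set approximates, at two given points, an Urysohn
function separating them, and the sets `{d ≤ 1/2}` are zero-sets. For (2) ⇒ (3), the zero-set
functions inject `X` continuously into a countable power of `ℝ`.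

For (3) ⇒ (1), sums of tent functions of the coarser metric, with radius below the separation of
a finite set, take arbitrary values on it; rational coefficients and centres from a countable dense
set then give a countable family of continuous functions dense in `ℝ^X`. This family is
ph-dense because an open-point condition `∃ x ∈ V, f x = r` is implied, for continuous `f`, by the
point-open conditions `f u < r < f v` with `u, v` in a connected set inside `V`; such sets are
infinite, so `u, v` can always be taken outside the finitely many points constrained so far. -/

lemma dense_generateFrom_of_forall_finset {α : Type*} {S : Set (Set α)} {D : Set α}
    (h : ∀ F : Finset (Set α), ↑F ⊆ S → ∀ x ∈ ⋂₀ (F : Set (Set α)),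
      (D ∩ ⋂₀ (F : Set (Set α))).Nonempty) :
    @Dense α (generateFrom S) D := by
  let := generateFrom S
  refine (isTopologicalBasis_of_subbasis rfl).dense_iff.2 ?_
  rintro _ ⟨F, ⟨hF, hFS⟩, rfl⟩ ⟨x, hx⟩
  have := h hF.toFinset (by simpa using hFS) x (by simpa using hx)
  simpa [inter_comm] using this

section TentFunctions

variable {Y : Type*} [MetricSpace Y] {ι : Type*}

noncomputable def tent (ρ : ℝ) (p y : Y) : ℝ :=
  max 0 (1 - dist y p / ρ)

noncomputable def tentSum [Fintype ι] (ρ : ℝ) (a : ι → ℝ) (p : ι → Y) (y : Y) : ℝ :=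
  ∑ i, a i * tent ρ (p i) y

lemma tent_self (ρ : ℝ) (p : Y) : tent ρ p p = 1 := by
  simp [tent]

lemma tent_eq_zero_of_le_dist {ρ : ℝ} (hρ : 0 < ρ) {p y : Y} (h : ρ ≤ dist y p) :
    tent ρ p y = 0 :=
  max_eq_left (by rw [sub_nonpos, le_div_iff₀ hρ]; linarith)

lemma continuous_tent (ρ : ℝ) (p : Y) : Continuous (tent ρ p) := by
  unfold tent; fun_prop

lemma tentSum_apply_self [Fintype ι] {ρ : ℝ} (hρ : 0 < ρ) (a : ι → ℝ) {p : ι → Y}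
    (hsep : Pairwise fun i j => ρ ≤ dist (p i) (p j)) (i : ι) :
    tentSum ρ a p (p i) = a i := by
  classical
  rw [tentSum, Finset.sum_eq_single i (fun j _ hji => by
    rw [tent_eq_zero_of_le_dist hρ (hsep hji.symm), mul_zero]) (by simp), tent_self, mul_one]

lemma continuous_tentSum [Fintype ι] (ρ : ℝ) (a : ι → ℝ) (p : ι → Y) :
    Continuous (tentSum ρ a p) :=
  continuous_finsetSum _ fun i _ => continuous_const.mul (continuous_tent ρ (p i))

lemma continuous_tentSum_params [Fintype ι] (ρ : ℝ) :
    Continuous fun q : (ι → ℝ) × (ι → Y) => tentSum ρ q.1 q.2 := by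
  refine continuous_pi fun y => ?_
  unfold tentSum tent; fun_prop

lemma exists_pairwise_le_dist [Finite ι] {p : ι → Y} (hp : Function.Injective p) :
    ∃ m : ℕ, Pairwise fun i j => 1 / ((m : ℝ) + 1) ≤ dist (p i) (p j) := by
  have : ∀ᶠ m : ℕ in Filter.atTop, ∀ ij : ι × ι, ij.1 ≠ ij.2 →
      1 / ((m : ℝ) + 1) ≤ dist (p ij.1) (p ij.2) := by
    refine Filter.eventually_all.2 fun ij => ?_
    by_cases hij : ij.1 = ij.2
    · exact Filter.Eventually.of_forall fun _ h => absurd hij h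
    · filter_upwards [(tendsto_order.1 tendsto_one_div_add_atTop_nhds_zero_nat).2 _
        (dist_pos.2 (hp.ne hij))] with m hm _ using hm.le
  obtain ⟨m, hm⟩ := this.exists
  exact ⟨m, fun i j hij => hm (i, j) hij⟩

end TentFunctions

lemma exists_countable_dense_continuous (Y : Type*) [MetricSpace Y] [SeparableSpace Y] :
    ∃ D : Set (Y → ℝ), D.Countable ∧ Dense D ∧ ∀ g ∈ D, Continuous g := by
  obtain ⟨Q, hQc, hQd⟩ := exists_countable_dense Y
  have := hQc.to_subtype
  refine ⟨⋃ (n : ℕ) (m : ℕ), range fun q : (Fin n → ℚ) × (Fin n → Q) =>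
    tentSum (1 / ((m : ℝ) + 1)) (fun i => (q.1 i : ℝ)) (fun i => (q.2 i : Y)),
    countable_iUnion fun n => countable_iUnion fun m => countable_range _, ?_, ?_⟩
  · refine dense_iff_inter_open.2 fun O hO ⟨c, hc⟩ => ?_
    obtain ⟨T, u, hu, hTu⟩ := isOpen_pi_iff.1 hO c hc
    set p : Fin T.card → Y := fun i => T.equivFin.symm i
    have hp : Function.Injective p := Subtype.val_injective.comp T.equivFin.symm.injective
    obtain ⟨m, hsep⟩ := exists_pairwise_le_dist hp
    set ψ := fun q : (Fin T.card → ℝ) × (Fin T.card → Y) =>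
      tentSum (1 / ((m : ℝ) + 1)) q.1 q.2
    have hB : IsOpen (ψ ⁻¹' (T : Set Y).pi u) :=
      (isOpen_set_pi T.finite_toSet fun t ht => (hu t ht).1).preimage
        (continuous_tentSum_params _)
    have hcB : (c ∘ p, p) ∈ ψ ⁻¹' (T : Set Y).pi u := fun t ht => by
      have ht' : t = p (T.equivFin ⟨t, ht⟩) := by simp [p]
      simp only [ψ]
      rw [ht', tentSum_apply_self (by positivity) _ hsep, Function.comp_apply, ← ht']
      exact (hu t ht).2
    have hdense : DenseRange fun q : (Fin T.card → ℚ) × (Fin T.card → Q) =>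
        ((fun i => (q.1 i : ℝ)), (fun i => (q.2 i : Y))) :=
      (DenseRange.piMap fun _ => Rat.denseRange_cast).prodMap
        (DenseRange.piMap fun _ => hQd.denseRange_val)
    obtain ⟨q, hq⟩ := hdense.exists_mem_open hB ⟨_, hcB⟩
    exact ⟨_, hTu hq, mem_iUnion₂.2 ⟨T.card, m, q, rfl⟩⟩
  · simp only [mem_iUnion, mem_range]
    rintro _ ⟨n, m, q, rfl⟩
    exact continuous_tentSum _ _ _

lemma SeparableSubmetrizable.exists_countable_dense_continuous {X : Type*} [TopologicalSpace X]
    (h : SeparableSubmetrizable X) :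
    ∃ D : Set (X → ℝ), D.Countable ∧ Dense D ∧ ∀ g ∈ D, Continuous g := by
  obtain ⟨t', hle, hsep, hmetr⟩ := h
  let := @metrizableSpaceMetric X t' hmetr
  obtain ⟨D, hDc, hDd, hDcont⟩ := _root_.exists_countable_dense_continuous X
  exact ⟨D, hDc, hDd, fun g hg => continuous_le_dom hle (hDcont g hg)⟩

lemma SeparableSubmetrizable.of_continuous_injective {X Y : Type*} [TopologicalSpace X]
    [TopologicalSpace Y] [SecondCountableTopology Y] [MetrizableSpace Y] {φ : X → Y}
    (hφ : Continuous φ) (hinj : Function.Injective φ) : SeparableSubmetrizable X := by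
  have hind : @IsInducing X Y (induced φ ‹_›) _ φ := IsInducing.induced φ
  exact ⟨induced φ ‹_›, fun U ⟨W, hW, hU⟩ => hU ▸ hW.preimage hφ,
    @SecondCountableTopology.to_separableSpace X (induced φ _)
      (@IsInducing.secondCountableTopology X Y (induced φ _) φ _ _ hind),
    @IsEmbedding.metrizableSpace X Y (induced φ _) _ _ φ
      (@IsEmbedding.mk X Y (induced φ _) _ φ hind hinj)⟩

lemma separableSubmetrizable_of_countable_t0Separating {X : Type*} [TopologicalSpace X]
    {δ : Set (Set X)} (hδc : δ.Countable) (hδ : T0Separating δ) (hδz : ∀ Z ∈ δ, IsZeroSet Z) :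
    SeparableSubmetrizable X := by
  have := hδc.to_subtype
  choose F hFc hFz using fun Z : δ => hδz Z Z.2
  refine SeparableSubmetrizable.of_continuous_injective (φ := fun x (Z : δ) => F Z x)
    (continuous_pi hFc) fun x y hxy => ?_
  by_contra hne
  have hmem : ∀ Z : δ, x ∈ (Z : Set X) ↔ y ∈ (Z : Set X) := fun Z => by
    rw [hFz Z]; exact iff_of_eq (congrArg (· ∈ ({0} : Set ℝ)) (congrFun hxy Z))
  obtain ⟨Z, hZ, hsep⟩ := hδ x y hne
  have := hmem ⟨Z, hZ⟩
  tauto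

lemma isZeroSet_setOf_le {X : Type*} [TopologicalSpace X] {f : X → ℝ} (hf : Continuous f)
    (a : ℝ) : IsZeroSet {x | f x ≤ a} :=
  ⟨fun x => max (f x - a) 0, by fun_prop, by ext; simp⟩

def biPointOpenSubbasis (X : Type*) [TopologicalSpace X] : Set (Set C(X, ℝ)) :=
  {S | ∃ (x : X) (U : Set ℝ), IsOpen U ∧ S = {f : C(X, ℝ) | f x ∈ U}} ∪
    {S | ∃ (V : Set X) (r : ℝ), IsOpen V ∧ S = {f : C(X, ℝ) | ∃ x ∈ V, f x = r}}

lemma isOpen_biPointOpen_setOf_apply_mem {X : Type*} [TopologicalSpace X] (x : X) {U : Set ℝ}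
    (hU : IsOpen U) : IsOpen[biPointOpenTopology X] {f : C(X, ℝ) | f x ∈ U} :=
  isOpen_generateFrom_of_mem (Or.inl ⟨x, U, hU, rfl⟩)

lemma exists_countable_t0Separating_of_separableSpace {X : Type*} [TopologicalSpace X]
    [T35Space X] (h : @SeparableSpace C(X, ℝ) (biPointOpenTopology X)) :
    ∃ δ : Set (Set X), δ.Countable ∧ T0Separating δ ∧ ∀ Z ∈ δ, IsZeroSet Z := by
  let := biPointOpenTopology X
  obtain ⟨D, hDc, hDd⟩ := exists_countable_dense C(X, ℝ)
  refine ⟨(fun d : C(X, ℝ) => {x | d x ≤ 1 / 2}) '' D, hDc.image _, fun x y hxy => ?_,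
    by rintro _ ⟨d, -, rfl⟩; exact isZeroSet_setOf_le d.continuous _⟩
  obtain ⟨f, hf, hfx, hfy⟩ := CompletelyRegularSpace.completely_regular x {y}
    isClosed_singleton (by simpa using hxy)
  have hO : IsOpen ({g : C(X, ℝ) | g x ∈ Iio (1 / 3)} ∩ {g | g y ∈ Ioi (2 / 3)}) :=
    (isOpen_biPointOpen_setOf_apply_mem x isOpen_Iio).inter
      (isOpen_biPointOpen_setOf_apply_mem y isOpen_Ioi)
  obtain ⟨d, ⟨hdx, hdy⟩, hdD⟩ := hDd.inter_open_nonempty _ hO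
    ⟨⟨fun z => f z, by fun_prop⟩, by simp [hfx], by simp [hfy rfl]; norm_num⟩
  have hdx' : d x < 1 / 3 := hdx
  have hdy' : 2 / 3 < d y := hdy
  exact ⟨_, ⟨d, hdD, rfl⟩,
    Or.inl ⟨show d x ≤ 1 / 2 by linarith, show ¬d y ≤ 1 / 2 by linarith⟩⟩

lemma IsPiNetwork.exists_isPreconnected_infinite_subset {X : Type*} [TopologicalSpace X]
    [T1Space X] {γ : Set (Set X)} (hγ : IsPiNetwork γ)
    (hγc : ∀ A ∈ γ, IsConnected A ∧ A.Nontrivial) {V : Set X} (hV : IsOpen V)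
    (hVne : V.Nonempty) : ∃ A ⊆ V, IsPreconnected A ∧ A.Infinite := by
  obtain ⟨A, hAγ, hAV⟩ := hγ.2 V hV hVne
  obtain ⟨hA, hAnt⟩ := hγc A hAγ
  exact ⟨A, hAV, hA.isPreconnected, hA.isPreconnected.infinite_of_nontrivial hAnt⟩

section Cylinders

variable {X : Type*} [TopologicalSpace X]

/-- `K` contains the continuous members of an open `W ⊆ X → ℝ` that contains the cylinder over a
finite `Q` through some `g`; `g` agrees with `f₀` on `L`, where point-open conditions satisfied by
`f₀` may still be imposed. -/
def ContainsCylinderNhd (f₀ : X → ℝ) (K : Set C(X, ℝ)) (L : Finset X) : Prop :=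
  ∃ W : Set (X → ℝ), IsOpen W ∧ (∀ f : C(X, ℝ), ⇑f ∈ W → f ∈ K) ∧
    ∃ (g : X → ℝ) (Q : Finset X), EqOn g f₀ L ∧ ∀ g', EqOn g' g Q → g' ∈ W

lemma containsCylinderNhd_univ (f₀ : X → ℝ) (L : Finset X) :
    ContainsCylinderNhd f₀ univ L :=
  ⟨univ, isOpen_univ, fun _ _ => trivial, f₀, ∅, eqOn_refl _ _, fun _ _ => trivial⟩

lemma ContainsCylinderNhd.inter_pointOpen [DecidableEq X] {f₀ : X → ℝ} {K : Set C(X, ℝ)}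
    {L : Finset X} {x : X} {U : Set ℝ} (hU : IsOpen U) (hx : f₀ x ∈ U)
    (h : ContainsCylinderNhd f₀ K (insert x L)) :
    ContainsCylinderNhd f₀ ({f | f x ∈ U} ∩ K) L := by
  obtain ⟨W, hW, hWK, g, Q, hgL, hgW⟩ := h
  refine ⟨{g' | g' x ∈ U} ∩ W, (hU.preimage (continuous_apply x)).inter hW,
    fun f hf => ⟨hf.1, hWK f hf.2⟩, g, insert x Q, hgL.mono (by simp), fun g' hg' => ⟨?_, ?_⟩⟩
  · show g' x ∈ U
    rw [hg' (by simp : x ∈ ↑(insert x Q)), hgL (by simp : x ∈ ↑(insert x L))]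
    exact hx
  · exact hgW g' (hg'.mono (by simp))

lemma ContainsCylinderNhd.inter_openPoint [DecidableEq X] {f₀ : X → ℝ} {K : Set C(X, ℝ)}
    {L : Finset X} {A V : Set X} {r : ℝ} (hAV : A ⊆ V) (hA : IsPreconnected A)
    (hAinf : A.Infinite) (h : ContainsCylinderNhd f₀ K L) :
    ContainsCylinderNhd f₀ ({f | ∃ x ∈ V, f x = r} ∩ K) L := by
  obtain ⟨W, hW, hWK, g, Q, hgL, hgW⟩ := h
  obtain ⟨u, ⟨huA, huQL⟩, v, ⟨hvA, hvQL⟩, huv⟩ :=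
    (hAinf.sdiff (Q ∪ L : Finset X).finite_toSet).nontrivial
  simp only [Finset.coe_union, mem_union, not_or] at huQL hvQL
  set g₁ := Function.update (Function.update g u (r - 1)) v (r + 1)
  have hg₁ : EqOn g₁ g (↑(Q ∪ L) : Set X) := fun z hz => by
    have : z ≠ u ∧ z ≠ v := ⟨by rintro rfl; simp_all, by rintro rfl; simp_all⟩
    simp [g₁, this.1, this.2]
  refine ⟨{g' | g' u < r ∧ r < g' v} ∩ W, ?_, fun f hf => ⟨?_, hWK f hf.2⟩, g₁,
    insert u (insert v Q), fun z hz => (hg₁ (by simp [hz])).trans (hgL hz),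
    fun g' hg' => ⟨?_, hgW g' fun z hz => ?_⟩⟩
  · exact (isOpen_lt (continuous_apply u) continuous_const |>.inter
      (isOpen_lt continuous_const (continuous_apply v))).inter hW
  · obtain ⟨y, hyA, hy⟩ := hA.intermediate_value huA hvA f.continuous.continuousOn
      ⟨hf.1.1.le, hf.1.2.le⟩
    exact ⟨y, hAV hyA, hy⟩
  · show g' u < r ∧ r < g' v
    rw [hg' (by simp : u ∈ ↑(insert u (insert v Q))),
      hg' (by simp : v ∈ ↑(insert u (insert v Q)))]
    simp [g₁, huv]
  · exact (hg' (by simp [hz])).trans (hg₁ (by simp [hz]))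

lemma containsCylinderNhd_sInter
    (hX : ∀ V : Set X, IsOpen V → V.Nonempty → ∃ A ⊆ V, IsPreconnected A ∧ A.Infinite)
    {f₀ : C(X, ℝ)} (F : Finset (Set C(X, ℝ))) (hF : ↑F ⊆ biPointOpenSubbasis X)
    (hf₀ : f₀ ∈ ⋂₀ (F : Set (Set C(X, ℝ)))) (L : Finset X) :
    ContainsCylinderNhd f₀ (⋂₀ ↑F) L := by
  classical
  induction F using Finset.induction_on generalizing L with
  | empty => simpa using containsCylinderNhd_univ (⇑f₀) L
  | insert S F _ ih =>
    rw [Finset.coe_insert, sInter_insert] at hf₀ ⊢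
    rw [Finset.coe_insert, insert_subset_iff] at hF
    rcases hF.1 with ⟨x, U, hU, rfl⟩ | ⟨V, r, hV, rfl⟩
    · exact (ih hF.2 hf₀.2 _).inter_pointOpen hU hf₀.1
    · obtain ⟨y, hyV, -⟩ := hf₀.1
      obtain ⟨A, hAV, hA, hAinf⟩ := hX V hV ⟨y, hyV⟩
      exact (ih hF.2 hf₀.2 L).inter_openPoint hAV hA hAinf

lemma dense_biPointOpen_of_dense
    (hX : ∀ V : Set X, IsOpen V → V.Nonempty → ∃ A ⊆ V, IsPreconnected A ∧ A.Infinite)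
    {D : Set (X → ℝ)} (hD : Dense D) (hDc : ∀ g ∈ D, Continuous g) :
    @Dense C(X, ℝ) (biPointOpenTopology X) {f | ⇑f ∈ D} := by
  refine dense_generateFrom_of_forall_finset fun F hF f₀ hf₀ => ?_
  obtain ⟨W, hW, hWF, g, Q, -, hgW⟩ := containsCylinderNhd_sInter hX F hF hf₀ ∅
  obtain ⟨d, hdW, hdD⟩ := hD.inter_open_nonempty W hW ⟨g, hgW g (eqOn_refl _ _)⟩
  exact ⟨⟨d, hDc d hdD⟩, hdD, hWF _ hdW⟩

end Cylinders

lemma separableSpace_biPointOpen_of_separableSubmetrizable {X : Type*} [TopologicalSpace X]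
    [T1Space X] (hγ : ∃ γ : Set (Set X), IsPiNetwork γ ∧ ∀ A ∈ γ, IsConnected A ∧ A.Nontrivial)
    (h : SeparableSubmetrizable X) : @SeparableSpace C(X, ℝ) (biPointOpenTopology X) := by
  obtain ⟨γ, hγ, hγc⟩ := hγ
  obtain ⟨D, hDc, hDd, hDcont⟩ := h.exists_countable_dense_continuous
  exact @SeparableSpace.mk _ (biPointOpenTopology X) ⟨_, hDc.preimage DFunLike.coe_injective,
    dense_biPointOpen_of_dense (fun V hV hVne =>
      hγ.exists_isPreconnected_infinite_subset hγc hV hVne) hDd hDcont⟩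

/-- For a Tychonoff space with a π-network of nontrivial connected sets,
TFAE: (1) `C_ph(X)` separable; (2) countable T₀-separating family of zero-sets;
(3) separable submetrizable. -/
theorem stmt3 {X : Type*} [TopologicalSpace X] [T35Space X]
    (hγ : ∃ γ : Set (Set X), IsPiNetwork γ ∧ ∀ A ∈ γ, IsConnected A ∧ A.Nontrivial) :
    List.TFAE [
      @SeparableSpace C(X, ℝ) (biPointOpenTopology X),
      ∃ δ : Set (Set X), δ.Countable ∧ T0Separating δ ∧ ∀ Z ∈ δ, IsZeroSet Z,
      SeparableSubmetrizable X] := by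
  tfae_have 1 → 2 := exists_countable_t0Separating_of_separableSpace
  tfae_have 2 → 3 := fun ⟨_, hδc, hδ, hδz⟩ =>
    separableSubmetrizable_of_countable_t0Separating hδc hδ hδz
  tfae_have 3 → 1 := separableSpace_biPointOpen_of_separableSubmetrizable hγ
  tfae_finish
end

section
/- Let X be a Tychonoff space that is separable submetrizable (admits a coarser separable metrizable topology) and has a countable π-network consisting of 𝓘-sets. Then C_ph(X) is separable. -/
/-!
A coarser separable metric topology gives a continuous injection `ι` of `X` into a separable
metric space `Y`, and the π-network gives countably many continuous `φ_A` such that every nonempty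
open `U` has some `φ_A(U)` containing a nondegenerate interval. The countably many finite sums of
pieces `x ↦ plateau (d(ι x, c) / ρ) * (α + φ_A x)`, with `c` in a countable dense subset of `Y` and
`ρ`, `α` rational, are dense in `C_ph(X)`. For a basic neighbourhood of `f₀`, given by finitely
many points `x` and pairs `(V, r)`, pick a fresh point `z_V` in each `V` (such `V` are infinite),
surround the `ι`-images of all these points by balls that are far apart, and use one piece per
ball: near `f₀ x` at `x`, and at `z_V` one whose profile takes the value `r` inside `V`.
-/

open TopologicalSpace Set Topology

open Function Filter Metric

universe u

theorem SeparableSubmetrizable.exists_continuous_injective {X : Type u} [TopologicalSpace X]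
    (h : SeparableSubmetrizable X) :
    ∃ (Y : Type u) (_ : MetricSpace Y) (_ : SeparableSpace Y) (ι : X → Y),
      Continuous ι ∧ Injective ι := by
  obtain ⟨t', hle, hsep, hmet⟩ := h
  let _ : MetricSpace X := @metrizableSpaceMetric X t' hmet
  exact ⟨X, _, hsep, id, continuous_def.2 hle, injective_id⟩

section BiPointOpen

variable {X : Type*} [TopologicalSpace X]

variable (X) in
def phSubbasis : Set (Set C(X, ℝ)) :=
  {S | ∃ (x : X) (U : Set ℝ), IsOpen U ∧ S = {f : C(X, ℝ) | f x ∈ U}} ∪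
    {S | ∃ (V : Set X) (r : ℝ), IsOpen V ∧ S = {f : C(X, ℝ) | ∃ x ∈ V, f x = r}}

def phNbhd (f₀ : C(X, ℝ)) (T : Finset X) (ε : ℝ) (P : Finset (Set X × ℝ)) : Set C(X, ℝ) :=
  {f | (∀ x ∈ T, |f x - f₀ x| < ε) ∧ ∀ q ∈ P, ∃ x ∈ q.1, f x = q.2}

lemma exists_phNbhd_subset_sInter {F : Set (Set C(X, ℝ))} (hF : F.Finite)
    (hFs : F ⊆ phSubbasis X) {f₀ : C(X, ℝ)} (hf₀ : f₀ ∈ ⋂₀ F) :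
    ∃ (T : Finset X) (ε : ℝ) (P : Finset (Set X × ℝ)), 0 < ε ∧
      (∀ q ∈ P, IsOpen q.1 ∧ q.1.Nonempty) ∧ phNbhd f₀ T ε P ⊆ ⋂₀ F := by
  classical
  induction F, hF using Set.Finite.induction_on with
  | empty => exact ⟨∅, 1, ∅, one_pos, by simp, by simp⟩
  | @insert S F _ _ ih =>
    rw [sInter_insert] at hf₀ ⊢
    obtain ⟨T, ε, P, hε, hP, hsub⟩ := ih (fun _ h => hFs (mem_insert_of_mem _ h)) hf₀.2
    rcases hFs (mem_insert _ _) with ⟨x, U, hU, rfl⟩ | ⟨V, r, hV, rfl⟩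
    · obtain ⟨δ, hδ, hball⟩ := Metric.isOpen_iff.1 hU _ hf₀.1
      refine ⟨insert x T, min ε δ, P, lt_min hε hδ, hP, fun f hf => ⟨hball ?_, hsub ⟨?_, hf.2⟩⟩⟩
      · rw [mem_ball, Real.dist_eq]
        exact (hf.1 x (Finset.mem_insert_self _ _)).trans_le (min_le_right _ _)
      · exact fun y hy => (hf.1 y (Finset.mem_insert_of_mem hy)).trans_le (min_le_left _ _)
    · obtain ⟨y, hy, -⟩ := hf₀.1
      refine ⟨T, ε, insert (V, r) P, hε, ?_, fun f hf => ⟨hf.2 _ (Finset.mem_insert_self _ _),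
        hsub ⟨hf.1, fun q hq => hf.2 q (Finset.mem_insert_of_mem hq)⟩⟩⟩
      rw [Finset.forall_mem_insert]
      exact ⟨⟨hV, y, hy⟩, hP⟩

lemma dense_biPointOpen_of_forall_phNbhd {D : Set C(X, ℝ)}
    (hD : ∀ (f₀ : C(X, ℝ)) (T : Finset X) (ε : ℝ) (P : Finset (Set X × ℝ)), 0 < ε →
      (∀ q ∈ P, IsOpen q.1 ∧ q.1.Nonempty) → (D ∩ phNbhd f₀ T ε P).Nonempty) :
    @Dense _ (biPointOpenTopology X) D := by
  have hB := isTopologicalBasis_of_subbasis (t := biPointOpenTopology X) (s := phSubbasis X) rfl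
  refine (@IsTopologicalBasis.dense_iff _ (biPointOpenTopology X) _ hB D).2 ?_
  rintro _ ⟨F, ⟨hF, hFs⟩, rfl⟩ ⟨f₀, hf₀⟩
  obtain ⟨T, ε, P, hε, hP, hsub⟩ := exists_phNbhd_subset_sInter hF hFs hf₀
  obtain ⟨d, hdD, hd⟩ := hD f₀ T ε P hε hP
  exact ⟨d, hsub hd, hdD⟩

end BiPointOpen

noncomputable def plateau (t : ℝ) : ℝ := max 0 (min 1 (2 - t))

lemma continuous_plateau : Continuous plateau := by
  unfold plateau
  fun_prop

lemma plateau_of_le_one {t : ℝ} (ht : t ≤ 1) : plateau t = 1 := by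
  unfold plateau
  rw [min_eq_left (by linarith), max_eq_right zero_le_one]

lemma plateau_of_two_le {t : ℝ} (ht : 2 ≤ t) : plateau t = 0 := by
  unfold plateau
  exact max_eq_left (min_le_of_right_le (by linarith))

section BumpPiece

variable {X Y : Type*} [MetricSpace Y]

variable (ι : X → Y) in
noncomputable def bumpPiece (y₀ : Y) (ρ α : ℝ) (g : X → ℝ) (x : X) : ℝ :=
  plateau (dist (ι x) y₀ / ρ) * (α + g x)

variable {ι : X → Y} {y₀ : Y} {ρ α : ℝ} {g : X → ℝ} {x : X}

lemma continuous_bumpPiece [TopologicalSpace X] (hι : Continuous ι) (hg : Continuous g) :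
    Continuous (bumpPiece ι y₀ ρ α g) :=
  (continuous_plateau.comp ((hι.dist continuous_const).div_const ρ)).mul
    (continuous_const.add hg)

lemma bumpPiece_of_dist_lt (h : dist (ι x) y₀ < ρ) : bumpPiece ι y₀ ρ α g x = α + g x := by
  have hρ : 0 < ρ := dist_nonneg.trans_lt h
  rw [bumpPiece, plateau_of_le_one ((div_le_one hρ).2 h.le), one_mul]

lemma bumpPiece_of_two_mul_le_dist (hρ : 0 < ρ) (h : 2 * ρ ≤ dist (ι x) y₀) :
    bumpPiece ι y₀ ρ α g x = 0 := by
  rw [bumpPiece, plateau_of_two_le ((le_div_iff₀ hρ).2 h), zero_mul]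

lemma sum_bumpPiece_eq {J : Type*} [Fintype J] {y : J → Y}
    (hsep : ∀ j j', j ≠ j' → ∀ p, dist p (y j) < ρ → 2 * ρ ≤ dist p (y j'))
    (α : J → ℝ) (g : J → X → ℝ) {j₀ : J} (hx : dist (ι x) (y j₀) < ρ) :
    ∑ j, bumpPiece ι (y j) ρ (α j) (g j) x = α j₀ + g j₀ x := by
  have hρ : 0 < ρ := dist_nonneg.trans_lt hx
  rw [Finset.sum_eq_single j₀ (fun j _ hj => bumpPiece_of_two_mul_le_dist hρ
    (hsep j₀ j (Ne.symm hj) _ hx)) (by simp), bumpPiece_of_dist_lt hx]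

lemma exists_pos_rat_lt_dist {J : Type*} [Finite J] {σ : J → Y} (hσ : Injective σ) :
    ∃ δ : ℚ, 0 < δ ∧ ∀ j j', j ≠ j' → (δ : ℝ) < dist (σ j) (σ j') := by
  have hev : ∀ᶠ t in 𝓝 (0 : ℝ), ∀ j j', j ≠ j' → t < dist (σ j) (σ j') :=
    eventually_all.2 fun j => eventually_all.2 fun j' => by
      by_cases h : j = j'
      · exact .of_forall fun _ hne => (hne h).elim
      · exact (eventually_lt_nhds (dist_pos.2 (hσ.ne h))).mono fun _ ht _ => ht
  obtain ⟨ε, hε, hball⟩ := Metric.eventually_nhds_iff.1 hev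
  obtain ⟨δ, hδ, hδε⟩ := exists_rat_btwn hε
  refine ⟨δ, by exact_mod_cast hδ, hball ?_⟩
  rwa [Real.dist_0_eq_abs, abs_of_pos hδ]

lemma exists_rat_radius_centers {J κ : Type*} [Finite J] {σ : J → Y} (hσ : Injective σ)
    {c : κ → Y} (hc : DenseRange c) :
    ∃ ρ : ℚ, 0 < ρ ∧ ∃ k : J → κ, (∀ j, dist (σ j) (c (k j)) < ρ) ∧
      ∀ j j', j ≠ j' → ∀ p, dist p (c (k j)) < ρ → 2 * (ρ : ℝ) ≤ dist p (c (k j')) := by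
  obtain ⟨δ, hδ, hσδ⟩ := exists_pos_rat_lt_dist hσ
  have hρ : (0 : ℝ) < (δ / 5 : ℚ) := by positivity
  choose k hk using fun j => hc.exists_dist_lt (σ j) hρ
  refine ⟨δ / 5, by positivity, k, hk, fun j j' hne p hp => ?_⟩
  have hpath : dist (σ j) (σ j') ≤
      dist (σ j) (c (k j)) + dist p (c (k j)) + dist p (c (k j')) + dist (σ j') (c (k j')) := by
    linarith [dist_triangle4 (σ j) (c (k j)) p (σ j'), dist_triangle p (c (k j')) (σ j'),
      dist_comm (c (k j)) p, dist_comm (c (k j')) (σ j')]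
  have := hσδ j j' hne
  have := hk j
  have := hk j'
  push_cast at *
  linarith

end BumpPiece

lemma exists_injective_mem_diff {X J : Type*} [Finite J] {V : J → Set X}
    (hV : ∀ j, (V j).Infinite) {T : Set X} (hT : T.Finite) :
    ∃ z : J → X, Injective z ∧ ∀ j, z j ∈ V j \ T := by
  obtain ⟨m, ⟨e⟩⟩ := Finite.exists_equiv_fin J
  suffices ∀ m (W : Fin m → Set X), (∀ i, (W i).Infinite) →
      ∃ z : Fin m → X, Injective z ∧ ∀ i, z i ∈ W i \ T by
    obtain ⟨z, hz, hzW⟩ := this m (V ∘ e.symm) fun i => hV _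
    exact ⟨z ∘ e, hz.comp e.injective, fun j => by simpa using hzW (e j)⟩
  intro m
  induction m with
  | zero => exact fun _ _ => ⟨finZeroElim, fun i => i.elim0, fun i => i.elim0⟩
  | succ m ih =>
    intro W hW
    obtain ⟨z, hz, hzW⟩ := ih (fun i => W i.succ) fun i => hW _
    obtain ⟨w, hwW, hw⟩ := ((hW 0).sdiff (hT.union (finite_range z))).nonempty
    rw [mem_union, not_or] at hw
    exact ⟨Fin.cons w z, Fin.cons_injective_of_injective hw.2 hz, Fin.cases ⟨hwW, hw.1⟩ hzW⟩

lemma exists_rat_add_eq_of_Icc_subset_image {X : Type*} {g : X → ℝ} {U : Set X} {a b : ℝ}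
    (hab : a < b) (h : Icc a b ⊆ g '' U) (r : ℝ) : ∃ α : ℚ, ∃ p ∈ U, α + g p = r := by
  obtain ⟨α, h₁, h₂⟩ := exists_rat_btwn (show r - b < r - a by linarith)
  obtain ⟨p, hp, hgp⟩ := h (show r - α ∈ Icc a b from ⟨by linarith, by linarith⟩)
  exact ⟨α, p, hp, by linarith⟩

lemma IsPiNetwork.exists_image_Icc {X : Type*} [TopologicalSpace X] {γ : Set (Set X)}
    (hπ : IsPiNetwork γ) (hI : ∀ A ∈ γ, IsISet A) :
    ∃ φ : γ → X → ℝ, (∀ A, Continuous (φ A)) ∧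
      ∀ U, IsOpen U → U.Nonempty → ∃ A a b, a < b ∧ Icc a b ⊆ φ A '' U := by
  choose φ a b hφ hab hφA using fun A : γ => hI A A.2
  refine ⟨φ, hφ, fun U hU hne => ?_⟩
  obtain ⟨A, hA, hAU⟩ := hπ.2 U hU hne
  exact ⟨⟨A, hA⟩, _, _, hab _, (hφA _).trans (image_mono hAU)⟩

section Approximation

variable {X Y κ Λ : Type*} [TopologicalSpace X] [MetricSpace Y]

/-- A piece is coded by its centre index, radius, offset and profile index. -/
def bumpSums (ι : X → Y) (c : κ → Y) (φ : Λ → X → ℝ) : Set C(X, ℝ) :=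
  (⇑) ⁻¹' range fun m : Multiset (κ × ℚ × ℚ × Λ) =>
    (m.map fun π => bumpPiece ι (c π.1) π.2.1 π.2.2.1 (φ π.2.2.2)).sum

lemma countable_bumpSums [Countable κ] [Countable Λ] (ι : X → Y) (c : κ → Y)
    (φ : Λ → X → ℝ) : (bumpSums ι c φ).Countable :=
  (countable_range _).preimage DFunLike.coe_injective

variable {ι : X → Y} {c : κ → Y} {φ : Λ → X → ℝ}

lemma mem_bumpSums_of_eq_sum {J : Type*} [Fintype J] (k : J → κ) (ρ : ℚ) (α : J → ℚ)
    (i : J → Λ) {d : C(X, ℝ)} (hd : ⇑d = fun y => ∑ j, bumpPiece ι (c (k j)) ρ (α j) (φ (i j)) y) :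
    d ∈ bumpSums ι c φ := by
  refine ⟨Finset.univ.val.map fun j => (k j, ρ, α j, i j), ?_⟩
  beta_reduce
  rw [Multiset.map_map, hd]
  exact Finset.sum_fn _ _

lemma bumpSums_inter_phNbhd_nonempty (hι : Continuous ι) (hinj : Injective ι)
    (hc : DenseRange c) (hφ : ∀ i, Continuous (φ i))
    (hφU : ∀ U, IsOpen U → U.Nonempty → ∃ i a b, a < b ∧ Icc a b ⊆ φ i '' U)
    (f₀ : C(X, ℝ)) (T : Finset X) (ε : ℝ) (P : Finset (Set X × ℝ)) (hε : 0 < ε)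
    (hP : ∀ q ∈ P, IsOpen q.1 ∧ q.1.Nonempty) :
    (bumpSums ι c φ ∩ phNbhd f₀ T ε P).Nonempty := by
  have hPinf : ∀ q : P, (q.1.1).Infinite := fun q => by
    obtain ⟨i, a, b, hab, h⟩ := hφU _ (hP q q.2).1 (hP q q.2).2
    exact ((Icc_infinite hab).mono h).of_image _
  obtain ⟨z, hz, hzV⟩ := exists_injective_mem_diff hPinf T.finite_toSet
  have hσ : Injective (ι ∘ Sum.elim ((↑) : T → X) z) := hinj.comp <|
    Sum.elim_injective.2 ⟨Subtype.val_injective, hz, fun x q h => (hzV q).2 (h ▸ x.2)⟩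
  obtain ⟨ρ, hρ, k, hk, hsep⟩ := exists_rat_radius_centers hσ hc
  have hT : ∀ x : T, ∃ i, ∃ α : ℚ, |α + φ i x - f₀ x| < ε := fun x => by
    -- any profile will do: the rational offset alone approximates `f₀ x`
    obtain ⟨i, -⟩ := hφU univ isOpen_univ ⟨x, trivial⟩
    obtain ⟨α, h₁, h₂⟩ := exists_rat_btwn (show f₀ x - φ i x - ε < f₀ x - φ i x by linarith)
    exact ⟨i, α, abs_sub_lt_iff.2 ⟨by linarith, by linarith⟩⟩
  have hP' : ∀ q : P, ∃ i, ∃ α : ℚ,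
      ∃ p ∈ q.1.1 ∩ ι ⁻¹' ball (c (k (.inr q))) ρ, α + φ i p = q.1.2 := fun q => by
    obtain ⟨i, a, b, hab, h⟩ :=
      hφU _ ((hP q q.2).1.inter (isOpen_ball.preimage hι)) ⟨z q, (hzV q).1, hk (.inr q)⟩
    exact ⟨i, exists_rat_add_eq_of_Icc_subset_image hab h _⟩
  choose iT αT hαT using hT
  choose iP αP p hp hpP using hP'
  let i : T ⊕ P → Λ := Sum.elim iT iP
  let α : T ⊕ P → ℚ := Sum.elim αT αP
  let d : C(X, ℝ) := ⟨fun y => ∑ j, bumpPiece ι (c (k j)) ρ (α j) (φ (i j)) y,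
    continuous_finsetSum _ fun j _ => continuous_bumpPiece hι (hφ _)⟩
  have hd : ∀ j y, dist (ι y) (c (k j)) < ρ → d y = α j + φ (i j) y := fun j y hy => by
    simpa [d] using sum_bumpPiece_eq hsep (fun j => (α j : ℝ)) (fun j => φ (i j)) hy
  refine ⟨d, mem_bumpSums_of_eq_sum k ρ α i rfl, fun x hx => ?_,
    fun q hq => ⟨p ⟨q, hq⟩, (hp ⟨q, hq⟩).1, ?_⟩⟩
  · rw [hd (.inl ⟨x, hx⟩) x (hk (.inl ⟨x, hx⟩))]
    exact hαT _
  · rw [hd (.inr ⟨q, hq⟩) _ (hp ⟨q, hq⟩).2]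
    exact hpP _

theorem separableSpace_biPointOpen_of_continuous_injective [SeparableSpace Y] [Countable Λ]
    (hι : Continuous ι) (hinj : Injective ι) (hφ : ∀ i, Continuous (φ i))
    (hφU : ∀ U, IsOpen U → U.Nonempty → ∃ i a b, a < b ∧ Icc a b ⊆ φ i '' U) :
    @SeparableSpace C(X, ℝ) (biPointOpenTopology X) := by
  obtain ⟨s, hs, hsd⟩ := exists_countable_dense Y
  have := hs.to_subtype
  exact @SeparableSpace.mk _ (biPointOpenTopology X) ⟨_, countable_bumpSums ι ((↑) : s → Y) φ,
    dense_biPointOpen_of_forall_phNbhd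
      (bumpSums_inter_phNbhd_nonempty hι hinj hsd.denseRange_val hφ hφU)⟩

end Approximation

theorem stmt7_general {X : Type*} [TopologicalSpace X]
    (hsub : SeparableSubmetrizable X)
    (hγ : ∃ γ : Set (Set X), γ.Countable ∧ IsPiNetwork γ ∧ ∀ A ∈ γ, IsISet A) :
    @SeparableSpace C(X, ℝ) (biPointOpenTopology X) := by
  obtain ⟨Y, _, _, ι, hι, hinj⟩ := hsub.exists_continuous_injective
  obtain ⟨γ, hγc, hπ, hI⟩ := hγ
  have := hγc.to_subtype
  obtain ⟨φ, hφ, hφU⟩ := hπ.exists_image_Icc hI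
  exact separableSpace_biPointOpen_of_continuous_injective hι hinj hφ hφU

/-- A separable submetrizable Tychonoff space with a countable π-network
consisting of 𝓘-sets has separable `C_ph(X)`. -/
theorem stmt7 {X : Type*} [TopologicalSpace X] [T35Space X]
    (hsub : SeparableSubmetrizable X)
    (hγ : ∃ γ : Set (Set X), γ.Countable ∧ IsPiNetwork γ ∧ ∀ A ∈ γ, IsISet A) :
    @SeparableSpace C(X, ℝ) (biPointOpenTopology X) :=
  stmt7_general hsub hγ
end
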